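/- arXiv:1602.02258 — 5 statements merged into one kernel-verified Lean document; each statement's English description precedes it below -/
import Mathlib

section
/- Let r, s be positive integers and let N_1,...,N_r and N'_1,...,N'_s be sequences of positive integers. If the polynomial identity ∑_{i=1}^{r}((1+t)^{N_i} - 1) = ∑_{i=1}^{s}((1+t)^{N'_i} - 1) holds in ℤ[t], then r = s and the multisets {N_1,...,N_r} and {N'_1,...,N'_s} coincide. -/
open Polynomial Finset

theorem stmt0 (r s : ℕ) (hr : 0 < r) (hs : 0 < s) (N : Fin r → ℕ) (N' : Fin s → ℕ)
    (hN : ∀ i, 0 < N i) (hN' : ∀ i, 0 < N' i)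
    (h : ∑ i, ((1 + (X : Polynomial ℤ)) ^ (N i) - 1)
        = ∑ i, ((1 + (X : Polynomial ℤ)) ^ (N' i) - 1)) :
    r = s ∧ ∀ j : ℕ, 0 < j →
      (Finset.univ.filter (fun i => N i = j)).card
        = (Finset.univ.filter (fun i => N' i = j)).card := by
  have h2 : ∑ i, ((X : Polynomial ℤ) ^ (N i) - 1)
      = ∑ i, ((X : Polynomial ℤ) ^ (N' i) - 1) := by
    have := congrArg (Polynomial.aeval ((X : Polynomial ℤ) - 1)) h
    simpa [map_sum, map_sub, map_pow, map_add, map_one] using this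
  have hc : ∀ j : ℕ,
      ∑ i, ((X : Polynomial ℤ) ^ (N i) - 1).coeff j
        = ∑ i, ((X : Polynomial ℤ) ^ (N' i) - 1).coeff j := by
    intro j
    have := congrArg (fun p => Polynomial.coeff p j) h2
    simpa only [Polynomial.finset_sum_coeff] using this
  have hrs : r = s := by
    have key : ∀ (n : ℕ), 0 < n → ((X : Polynomial ℤ) ^ n - 1).coeff 0 = -1 := by
      intro n hn
      simp [Polynomial.coeff_X_pow, hn.ne]
    have h0 := hc 0
    rw [Finset.sum_congr rfl (fun i _ => key _ (hN i)),
        Finset.sum_congr rfl (fun i _ => key _ (hN' i))] at h0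
    simp only [Finset.sum_const, Finset.card_univ, Fintype.card_fin, nsmul_eq_mul,
      mul_neg, mul_one, neg_inj, Nat.cast_inj] at h0
    exact h0
  refine ⟨hrs, fun j hj => ?_⟩
  have key : ∀ (n : ℕ), ((X : Polynomial ℤ) ^ n - 1).coeff j
      = if n = j then (1:ℤ) else 0 := by
    intro n
    rw [Polynomial.coeff_sub, Polynomial.coeff_X_pow, Polynomial.coeff_one,
      if_neg hj.ne', sub_zero]
    exact if_congr eq_comm rfl rfl
  have hj' := hc j
  rw [Finset.sum_congr rfl (fun i _ => key (N i)),
      Finset.sum_congr rfl (fun i _ => key (N' i)),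
      Finset.sum_boole, Finset.sum_boole] at hj'
  exact_mod_cast hj'
end

section
/- For integers n ≥ d ≥ 0, the polynomial p_{n,d}(s) = ∑_{j=0}^{n-d} C(n, d+j)·(s-1)^j, when expanded in powers of s, has all coefficients non-negative. -/
open Polynomial Finset

noncomputable def Paux (n d : ℕ) : Polynomial ℤ :=
  ∑ j ∈ Finset.range (n - d + 1),
    Polynomial.C ((n.choose (d + j) : ℤ)) * ((X : Polynomial ℤ) - 1) ^ j

lemma Paux_zero (n : ℕ) : Paux n 0 = X ^ n := by
  have : (X : Polynomial ℤ) ^ n = ((X - 1) + 1) ^ n := by ring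
  rw [this, add_pow, Paux]
  simp only [one_pow, mul_one, Nat.sub_zero, zero_add]
  refine Finset.sum_congr rfl fun j hj => ?_
  rw [mul_comm]
  simp [Polynomial.C_eq_natCast]

lemma Paux_rec (n d : ℕ) : Paux (n+1) (d+1) = Paux n d + Paux n (d+1) := by
  unfold Paux
  have h1 : (n+1) - (d+1) = n - d := by omega
  rw [h1]
  have : ∀ j, ((n+1).choose (d+1+j) : ℤ) = (n.choose (d+j) : ℤ) + (n.choose (d+1+j) : ℤ) := by
    intro j
    have : (n+1).choose (d+1+j) = n.choose (d+j) + n.choose (d+1+j) := by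
      have := Nat.choose_succ_succ n (d+j)
      simpa [Nat.add_assoc, Nat.add_comm, Nat.add_left_comm] using this
    exact_mod_cast this
  simp only [this, Polynomial.C_add, add_mul, Finset.sum_add_distrib]
  congr 1
  rcases Nat.lt_or_ge d n with hd | hd
  · have h2 : n - d + 1 = (n - (d+1) + 1) + 1 := by omega
    rw [h2, Finset.sum_range_succ]
    have h3 : d + 1 + (n - (d + 1) + 1) = n + 1 := by omega
    rw [h3]
    simp [Nat.choose_succ_self]
  · have h2 : n - d + 1 = 1 := by omega
    have h3 : n - (d+1) + 1 = 1 := by omega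
    rw [h2, h3]

lemma Paux_nonneg : ∀ n d k : ℕ, 0 ≤ (Paux n d).coeff k := by
  intro n
  induction n with
  | zero =>
    intro d k
    unfold Paux
    simp only [Nat.zero_sub, zero_add, Finset.sum_range_one, add_zero, pow_zero, mul_one,
      Polynomial.coeff_C]
    split <;> positivity
  | succ n ih =>
    intro d k
    cases d with
    | zero =>
      rw [Paux_zero, Polynomial.coeff_X_pow]
      split <;> norm_num
    | succ d =>
      rw [Paux_rec, Polynomial.coeff_add]
      exact add_nonneg (ih d k) (ih (d+1) k)

theorem stmt1 (n d : ℕ) (h : d ≤ n) (k : ℕ) :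
    0 ≤ (∑ j ∈ Finset.range (n - d + 1),
          Polynomial.C ((n.choose (d + j) : ℤ)) * ((X : Polynomial ℤ) - 1) ^ j).coeff k :=
  Paux_nonneg n d k
end

section
/- Fix integers n > d ≥ 2 and let α_j be as defined by ∑_{j=0}^{n-d+1} α_j s^j = ∑_{j=0}^{n-d} C(n,d+j)(s-1)^{j+1}. Then for every j with 0 ≤ j ≤ n-d, the partial sum -∑_{i=0}^{j} α_i is non-negative. -/
open Polynomial Finset

noncomputable def Ppoly (n d : ℕ) : Polynomial ℤ :=
  ∑ j ∈ Finset.range (n - d + 1),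
    Polynomial.C ((n.choose (d + j) : ℤ)) * ((X : Polynomial ℤ) - 1) ^ j

lemma Ppoly_rec (n d : ℕ) (hd : 1 ≤ d) (hdn : d ≤ n) :
    Ppoly (n + 1) d = X * Ppoly n d + Polynomial.C ((n.choose (d - 1) : ℤ)) := by
  unfold Ppoly
  have h1 : n + 1 - d = (n - d) + 1 := by omega
  rw [h1]
  have hpas : ∀ j, ((n + 1).choose (d + j) : ℤ)
      = (n.choose (d + j) : ℤ) + (n.choose (d - 1 + j) : ℤ) := by
    intro j
    have hnat : (n + 1).choose (d + j) = n.choose (d - 1 + j) + n.choose (d + j) := by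
      rw [show d + j = (d - 1 + j) + 1 from by omega, Nat.choose_succ_succ,
        Nat.succ_eq_add_one, show (d - 1 + j) + 1 = d + j from by omega]
    rw [hnat]
    push_cast
    ring
  have hsplit : ∑ j ∈ Finset.range (n - d + 1 + 1),
      Polynomial.C (((n + 1).choose (d + j) : ℤ)) * ((X : Polynomial ℤ) - 1) ^ j
      = (∑ j ∈ Finset.range (n - d + 1 + 1),
          Polynomial.C ((n.choose (d + j) : ℤ)) * ((X : Polynomial ℤ) - 1) ^ j)
        + ∑ j ∈ Finset.range (n - d + 1 + 1),
          Polynomial.C ((n.choose (d - 1 + j) : ℤ)) * ((X : Polynomial ℤ) - 1) ^ j := by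
    rw [← Finset.sum_add_distrib]
    apply Finset.sum_congr rfl
    intro j _
    rw [hpas j, map_add]
    ring
  rw [hsplit]
  have hS1 : ∑ j ∈ Finset.range (n - d + 1 + 1),
      Polynomial.C ((n.choose (d + j) : ℤ)) * ((X : Polynomial ℤ) - 1) ^ j
      = ∑ j ∈ Finset.range (n - d + 1),
          Polynomial.C ((n.choose (d + j) : ℤ)) * ((X : Polynomial ℤ) - 1) ^ j := by
    rw [Finset.sum_range_succ]
    have : n.choose (d + (n - d + 1)) = 0 := by
      apply Nat.choose_eq_zero_of_lt; omega
    simp [this]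
  have hS2 : ∑ j ∈ Finset.range (n - d + 1 + 1),
      Polynomial.C ((n.choose (d - 1 + j) : ℤ)) * ((X : Polynomial ℤ) - 1) ^ j
      = Polynomial.C ((n.choose (d - 1) : ℤ))
        + ((X : Polynomial ℤ) - 1) * ∑ j ∈ Finset.range (n - d + 1),
            Polynomial.C ((n.choose (d + j) : ℤ)) * ((X : Polynomial ℤ) - 1) ^ j := by
    rw [Finset.sum_range_succ']
    rw [Finset.mul_sum]
    simp only [pow_zero, mul_one, add_zero]
    rw [add_comm]
    congr 1
    apply Finset.sum_congr rfl
    intro j _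
    have : d - 1 + (j + 1) = d + j := by omega
    rw [this]
    ring
  rw [hS1, hS2]
  ring

lemma Ppoly_coeff_nonneg (d : ℕ) (hd : 1 ≤ d) (n : ℕ) (hn : d ≤ n) :
    ∀ j, 0 ≤ (Ppoly n d).coeff j := by
  induction n, hn using Nat.le_induction with
  | base =>
    intro j
    have : Ppoly d d = Polynomial.C ((d.choose d : ℤ)) := by
      unfold Ppoly
      simp [Nat.sub_self]
    rw [this, Polynomial.coeff_C]
    split <;> simp
  | succ n hn ih =>
    intro j
    rw [Ppoly_rec n d hd hn, Polynomial.coeff_add]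
    cases j with
    | zero =>
      rw [Polynomial.mul_coeff_zero]
      simp
    | succ j =>
      rw [Polynomial.coeff_X_mul, Polynomial.coeff_C]
      simpa using ih j

lemma teles (p : Polynomial ℤ) (j : ℕ) :
    ∑ i ∈ Finset.range (j + 1), (((X : Polynomial ℤ) - 1) * p).coeff i = -(p.coeff j) := by
  induction j with
  | zero =>
    simp [sub_mul, Polynomial.coeff_sub, Polynomial.mul_coeff_zero]
  | succ j ih =>
    rw [Finset.sum_range_succ, ih, sub_mul, Polynomial.coeff_sub, one_mul,
      Polynomial.coeff_X_mul]
    ring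

theorem stmt8 (n d : ℕ) (hd : 2 ≤ d) (hn : d < n) (α : ℕ → ℤ)
    (hα : ∑ j ∈ Finset.range (n - d + 2), Polynomial.C (α j) * (X : Polynomial ℤ) ^ j
        = ∑ j ∈ Finset.range (n - d + 1),
            Polynomial.C ((n.choose (d + j) : ℤ)) * ((X : Polynomial ℤ) - 1) ^ (j + 1)) :
    ∀ j ≤ n - d, 0 ≤ -∑ i ∈ Finset.range (j + 1), α i := by
  have hRHS : (∑ j ∈ Finset.range (n - d + 1),
      Polynomial.C ((n.choose (d + j) : ℤ)) * ((X : Polynomial ℤ) - 1) ^ (j + 1))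
      = ((X : Polynomial ℤ) - 1) * Ppoly n d := by
    unfold Ppoly
    rw [Finset.mul_sum]
    apply Finset.sum_congr rfl
    intro j _
    ring
  rw [hRHS] at hα
  have hcoeff : ∀ i, i < n - d + 2 → α i = (((X : Polynomial ℤ) - 1) * Ppoly n d).coeff i := by
    intro i hi
    have h := congrArg (fun p => Polynomial.coeff p i) hα
    simp only [Polynomial.finset_sum_coeff, Polynomial.coeff_C_mul,
      Polynomial.coeff_X_pow, mul_ite, mul_one, mul_zero] at h
    rw [Finset.sum_ite_eq (Finset.range (n - d + 2)) i α] at h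
    simpa [Finset.mem_range.mpr hi] using h
  intro j hj
  have hsum : ∑ i ∈ Finset.range (j + 1), α i
      = ∑ i ∈ Finset.range (j + 1), (((X : Polynomial ℤ) - 1) * Ppoly n d).coeff i := by
    apply Finset.sum_congr rfl
    intro i hi
    exact hcoeff i (by simp at hi; omega)
  rw [hsum, teles, neg_neg]
  exact Ppoly_coeff_nonneg d (by omega) n (by omega) j
end

section
/- Let I ⊂ S = K[x_1,...,x_n] be a squarefree strongly stable ideal generated in degree d. For j ≥ 0 let I_{[d+j]} be the ideal generated by all squarefree monomials of degree d+j in I, and let μ_{d+j}(I) be the number of minimal monomial generators of I_{[d+j]}. For i ≥ 0, let m_{d+i}(I) be the number of minimal monomial generators u of I with max support index m(u) = d+i. Then μ_{d+j}(I) = ∑_{i=0}^{n-d} C(n-d-i, j) m_{d+i}(I) for all j ≥ 0. -/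
/-!
Every `T ⊆ [n]` containing a member of `G` splits uniquely as `T = g ∪ S` with `g ∈ G` and
`S ⊆ (max g, n]`: strong stability lets one push a generator inside `T` towards smaller indices
until every element of `T \ g` lies above `max g` (take `g ⊆ T` of least index sum), and since
all generators have the same size, `g` is recovered as the part of `T` up to `max g`. Counting
the `(d + j)`-sets by their generator `g` gives `C(n - max g, j)` sets for each `g`.
-/

open Finset

def IsSquarefreeStronglyStable (G : Finset (Finset ℕ)) : Prop :=
  ∀ g ∈ G, ∀ i ∈ g, ∀ j, 1 ≤ j → j < i → j ∉ g → insert j (g.erase i) ∈ G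

lemma IsSquarefreeStronglyStable.exists_subset_forall_sup_lt {G : Finset (Finset ℕ)}
    (hG : IsSquarefreeStronglyStable G) {T : Finset ℕ} (hT : ∀ t ∈ T, 1 ≤ t)
    (hGT : ∃ g ∈ G, g ⊆ T) : ∃ g ∈ G, g ⊆ T ∧ ∀ t ∈ T, t ∉ g → g.sup id < t := by
  obtain ⟨g, hg, hmin⟩ := (G.filter (· ⊆ T)).exists_min_image (fun g => g.sum id)
    (filter_nonempty_iff.2 hGT)
  obtain ⟨hgG, hgT⟩ := mem_filter.1 hg
  refine ⟨g, hgG, hgT, fun t ht htg => ?_⟩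
  by_contra! hle
  have hg_ne : g.Nonempty := nonempty_iff_ne_empty.2 fun h => by
    subst h; rw [sup_empty, Nat.bot_eq_zero] at hle; exact absurd (hT t ht) (by omega)
  obtain ⟨M, hM, hsup⟩ := exists_mem_eq_sup g hg_ne id
  have htM : t < M :=
    lt_of_le_of_ne (by simpa [hsup] using hle) (ne_of_mem_of_not_mem hM htg).symm
  have hswap : insert t (g.erase M) ∈ G.filter (· ⊆ T) := mem_filter.2
    ⟨hG g hgG M hM t (hT t ht) htM htg, insert_subset ht ((erase_subset _ _).trans hgT)⟩
  have hsum := hmin _ hswap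
  rw [sum_insert fun h => htg (mem_of_mem_erase h), ← add_sum_erase g id hM] at hsum
  simp only [id_eq] at hsum
  omega

lemma card_le_sup_id {g : Finset ℕ} (hg : ∀ x ∈ g, 1 ≤ x) : g.card ≤ g.sup id := by
  have hsub : g ⊆ Icc 1 (g.sup id) := fun x hx =>
    mem_Icc.2 ⟨hg x hx, le_sup (f := id) hx⟩
  simpa using card_le_card hsub

lemma disjoint_of_forall_sup_lt {g S : Finset ℕ} (hS : ∀ x ∈ S, g.sup id < x) :
    Disjoint g S :=
  disjoint_left.2 fun x hxg hxS => (hS x hxS).not_ge (le_sup (f := id) hxg)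

lemma eq_of_union_eq_of_forall_sup_lt {g g' S S' : Finset ℕ} (hcard : g.card = g'.card)
    (hS : ∀ x ∈ S, g.sup id < x) (hS' : ∀ x ∈ S', g'.sup id < x) (h : g ∪ S = g' ∪ S') :
    g = g' := by
  wlog hle : g.sup id ≤ g'.sup id generalizing g g' S S'
  · exact (this hcard.symm hS' hS h.symm (le_of_not_ge hle)).symm
  refine eq_of_subset_of_card_le (fun x hx => ?_) hcard.ge
  have hxS' : x ∉ S' := fun hx' => (hS' x hx').not_ge ((le_sup (f := id) hx).trans hle)
  have hx' : x ∈ g' ∪ S' := h ▸ mem_union_left S hx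
  exact (mem_union.1 hx').resolve_right hxS'

def extendAbove (n j : ℕ) (g : Finset ℕ) : Finset (Finset ℕ) :=
  (powersetCard j (Ioc (g.sup id) n)).image (g ∪ ·)

lemma mem_extendAbove {n j : ℕ} {g T : Finset ℕ} :
    T ∈ extendAbove n j g ↔ ∃ S ⊆ Ioc (g.sup id) n, S.card = j ∧ g ∪ S = T := by
  simp [extendAbove, and_assoc]

lemma card_extendAbove (n j : ℕ) (g : Finset ℕ) :
    (extendAbove n j g).card = (n - g.sup id).choose j := by
  rw [extendAbove, card_image_of_injOn, card_powersetCard, Nat.card_Ioc]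
  intro S hS S' hS' h
  have hlt : ∀ {S}, S ∈ (powersetCard j (Ioc (g.sup id) n) : Set (Finset ℕ)) →
      ∀ x ∈ S, g.sup id < x := fun hS x hx => (mem_Ioc.1 ((mem_powersetCard.1 hS).1 hx)).1
  rw [← union_sdiff_cancel_left (disjoint_of_forall_sup_lt (hlt hS)),
    ← union_sdiff_cancel_left (disjoint_of_forall_sup_lt (hlt hS'))]
  exact congrArg (· \ g) h

lemma pairwiseDisjoint_extendAbove {G : Finset (Finset ℕ)} {d : ℕ}
    (hcard : ∀ g ∈ G, g.card = d) (n j : ℕ) :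
    (G : Set (Finset ℕ)).PairwiseDisjoint (extendAbove n j) := by
  intro g hg g' hg' hne
  refine disjoint_left.2 fun T hT hT' => hne ?_
  obtain ⟨S, hS, -, rfl⟩ := mem_extendAbove.1 hT
  obtain ⟨S', hS', -, hT'⟩ := mem_extendAbove.1 hT'
  exact eq_of_union_eq_of_forall_sup_lt ((hcard g hg).trans (hcard g' hg').symm)
    (fun x hx => (mem_Ioc.1 (hS hx)).1) (fun x hx => (mem_Ioc.1 (hS' hx)).1) hT'.symm

lemma filter_powerset_exists_subset_eq_biUnion {n d : ℕ} {G : Finset (Finset ℕ)}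
    (hsub : ∀ g ∈ G, g ⊆ Icc 1 n) (hcard : ∀ g ∈ G, g.card = d)
    (hstable : IsSquarefreeStronglyStable G) (j : ℕ) :
    (Icc 1 n).powerset.filter (fun T => T.card = d + j ∧ ∃ g ∈ G, g ⊆ T)
      = G.biUnion (extendAbove n j) := by
  ext T
  simp only [mem_filter, mem_powerset, mem_biUnion, mem_extendAbove]
  constructor
  · rintro ⟨hTn, hTcard, hGT⟩
    obtain ⟨g, hg, hgT, hlt⟩ :=
      hstable.exists_subset_forall_sup_lt (fun t ht => (mem_Icc.1 (hTn ht)).1) hGT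
    refine ⟨g, hg, T \ g, fun x hx => ?_, ?_, union_sdiff_of_subset hgT⟩
    · obtain ⟨hxT, hxg⟩ := mem_sdiff.1 hx
      exact mem_Ioc.2 ⟨hlt x hxT hxg, (mem_Icc.1 (hTn hxT)).2⟩
    · rw [card_sdiff_of_subset hgT, hTcard, hcard g hg, Nat.add_sub_cancel_left]
  · rintro ⟨g, hg, S, hS, hScard, rfl⟩
    have hSlt : ∀ x ∈ S, g.sup id < x := fun x hx => (mem_Ioc.1 (hS hx)).1
    refine ⟨union_subset (hsub g hg) fun x hx => ?_, ?_, g, hg, subset_union_left⟩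
    · exact mem_Icc.2 ⟨Nat.one_le_of_lt (hSlt x hx), (mem_Ioc.1 (hS hx)).2⟩
    · rw [card_union_of_disjoint (disjoint_of_forall_sup_lt hSlt), hcard g hg, hScard]

lemma sum_comp_eq_sum_range_mul_card_filter {α : Type*} (s : Finset α) (f : α → ℕ)
    (φ : ℕ → ℕ) {a b : ℕ} (hf : ∀ x ∈ s, a ≤ f x ∧ f x ≤ b) :
    ∑ x ∈ s, φ (f x) = ∑ i ∈ range (b - a + 1), φ (a + i) * (s.filter (f · = a + i)).card := by
  have hmaps : ∀ x ∈ s, f x - a ∈ range (b - a + 1) := fun x hx =>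
    mem_range.2 (by have := hf x hx; omega)
  rw [← sum_fiberwise_of_maps_to hmaps]
  refine sum_congr rfl fun i _ => ?_
  have hfiber : s.filter (fun x => f x - a = i) = s.filter (f · = a + i) :=
    filter_congr fun x hx => by have := hf x hx; omega
  rw [hfiber, sum_congr rfl fun x hx => by rw [(mem_filter.1 hx).2], sum_const, smul_eq_mul,
    mul_comm]

/-- A squarefree monomial in `x_1, …, x_n` is modelled as a subset of `{1, …, n}` and `G` is
`G(I)`; `μ_{d+j}(I)` counts the `(d+j)`-subsets of `[n]` containing a member of `G`, and
`m_{d+i}(I)` counts the `g ∈ G` with `max g = d+i`. -/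
theorem stmt11_general (n d : ℕ)
    (G : Finset (Finset ℕ))
    (hsub : ∀ g ∈ G, g ⊆ Finset.Icc 1 n)
    (hcard : ∀ g ∈ G, g.card = d)
    (hstable : ∀ g ∈ G, ∀ i ∈ g, ∀ j, 1 ≤ j → j < i → j ∉ g →
      insert j (g.erase i) ∈ G)
    (j : ℕ) :
    ((Finset.Icc 1 n).powerset.filter (fun T => T.card = d + j ∧ ∃ g ∈ G, g ⊆ T)).card
      = ∑ i ∈ Finset.range (n - d + 1),
          (n - d - i).choose j * (G.filter (fun g => g.sup id = d + i)).card := by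
  have hsup_bounds : ∀ g ∈ G, d ≤ g.sup id ∧ g.sup id ≤ n := fun g hg =>
    ⟨hcard g hg ▸ card_le_sup_id fun x hx => (mem_Icc.1 (hsub g hg hx)).1,
      Finset.sup_le fun x hx => (mem_Icc.1 (hsub g hg hx)).2⟩
  rw [filter_powerset_exists_subset_eq_biUnion hsub hcard hstable,
    card_biUnion (pairwiseDisjoint_extendAbove hcard n j)]
  simp only [card_extendAbove]
  rw [sum_comp_eq_sum_range_mul_card_filter G (·.sup id) (fun m => (n - m).choose j) hsup_bounds]
  simp only [Nat.sub_sub]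

/-- Lemma on the generators of a squarefree strongly stable ideal, in the combinatorial
model: a squarefree monomial in `x_1, …, x_n` is a subset of `{1, …, n}`; the ideal `I`
generated in degree `d` is given by its minimal generating set `G` consisting of `d`-sets;
squarefree strong stability is the exchange property on `G`.  The number of minimal
generators `μ_{d+j}(I)` of `I_{[d+j]}` is the number of `(d+j)`-subsets of `[n]` containing
a member of `G`, and `m_{d+i}(I)` is the number of `g ∈ G` with `m(g) = max g = d+i`. -/
theorem stmt11 (n d : ℕ) (hd : 1 ≤ d) (hdn : d ≤ n)
    (G : Finset (Finset ℕ)) (hG : G.Nonempty)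
    (hsub : ∀ g ∈ G, g ⊆ Finset.Icc 1 n)
    (hcard : ∀ g ∈ G, g.card = d)
    (hstable : ∀ g ∈ G, ∀ i ∈ g, ∀ j, 1 ≤ j → j < i → j ∉ g →
      insert j (g.erase i) ∈ G)
    (j : ℕ) :
    ((Finset.Icc 1 n).powerset.filter (fun T => T.card = d + j ∧ ∃ g ∈ G, g ⊆ T)).card
      = ∑ i ∈ Finset.range (n - d + 1),
          (n - d - i).choose j * (G.filter (fun g => g.sup id = d + i)).card :=
  stmt11_general n d G hsub hcard hstable j
end

section
/- Let C be a d-uniform clutter on [n] that is both chordal and co-chordal. Then for every i, λ_i(C) ≤ C(n-1-i, d-2), where λ_i(C) is the i-th entry of the λ-sequence of C. -/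
open Finset

namespace Clutter

variable {n : ℕ}

/-- Deletion `D ∖ e` of a `(d-1)`-set `e` from a clutter `D`: remove all circuits
containing `e`. -/
def del (D : Finset (Finset (Fin n))) (e : Finset (Fin n)) : Finset (Finset (Fin n)) :=
  D.filter (fun F => ¬ e ⊆ F)

/-- Successive deletion of a list of submaximal circuits. -/
def delList (D : Finset (Finset (Fin n))) (L : List (Finset (Fin n))) :
    Finset (Finset (Fin n)) :=
  L.foldl del D

/-- The open neighborhood of `e` in `D`. -/
def nbhd (D : Finset (Finset (Fin n))) (e : Finset (Fin n)) : Finset (Fin n) :=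
  Finset.univ.filter (fun c => insert c e ∈ D)

/-- `V` is a clique of the `d`-uniform clutter `D`: every `d`-subset of `V` is a circuit. -/
def IsClique (D : Finset (Finset (Fin n))) (d : ℕ) (V : Finset (Fin n)) : Prop :=
  ∀ F ⊆ V, F.card = d → F ∈ D

/-- `e` is a simplicial submaximal circuit of the `d`-uniform clutter `D`. -/
def IsSimplicial (D : Finset (Finset (Fin n))) (d : ℕ) (e : Finset (Fin n)) : Prop :=
  e.card = d - 1 ∧ (∃ F ∈ D, e ⊆ F) ∧ IsClique D d (e ∪ nbhd D e)

/-- `L` is a simplicial sequence for the `d`-uniform clutter `D`. -/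
def IsSimplicialSeq (D : Finset (Finset (Fin n))) (d : ℕ) (L : List (Finset (Fin n))) :
    Prop :=
  ∀ k (h : k < L.length), IsSimplicial (delList D (L.take k)) d (L.get ⟨k, h⟩)

/-- The complete `d`-uniform clutter on `n` vertices. -/
def complete (n d : ℕ) : Finset (Finset (Fin n)) :=
  Finset.univ.filter (fun F => F.card = d)

/-- `C` is co-chordal: it is obtained from the complete clutter by deleting a simplicial
sequence. -/
def IsCoChordal (d : ℕ) (C : Finset (Finset (Fin n))) : Prop :=
  ∃ L, IsSimplicialSeq (complete n d) d L ∧ delList (complete n d) L = C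

/-- The `i`-th entry of the λ-sequence of `C` computed from the simplicial order `L`:
the number of steps whose open neighborhood has exactly `i` elements. -/
def lamCount (C : Finset (Finset (Fin n))) (L : List (Finset (Fin n))) (i : ℕ) : ℕ :=
  ((List.finRange L.length).filter
    (fun (k : Fin L.length) => (nbhd (delList C (L.take k.1)) (L.get k)).card = i)).length

end Clutter

/-!
Appending a simplicial order of `C` to one exhibiting `C` as co-chordal gives a simplicial order
of the complete clutter `C_{n,d}`, so the λ-multiset of `C` is contained in that of `C_{n,d}`.
That multiset `{m_j}` is the same for every simplicial order of `C_{n,d}`: deleting a simplicial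
`e` with open neighbourhood `N` destroys exactly the `C(|N|, k)` cliques `e ∪ S` (`S ⊆ N`,
`|S| = k`) of size `d - 1 + k`, hence `∑ⱼ C(m_j, k) = C(n, d - 1 + k)` for all `k ≥ 1`, and these
binomial moments determine a multiset. By the dual Vandermonde identity the multiset with
`C(n - 1 - i, d - 2)` copies of each `i < n` has the same moments.
-/

open Finset Polynomial

lemma Nat.sum_antidiagonal_choose_mul_choose (m a b : ℕ) :
    ∑ p ∈ antidiagonal m, p.1.choose a * p.2.choose b = (m + 1).choose (a + b + 1) := by
  induction m generalizing b with
  | zero => cases a <;> cases b <;> simp [Nat.choose_eq_zero_of_lt]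
  | succ m ih =>
    rw [Nat.sum_antidiagonal_succ']
    cases b with
    | zero => simpa [Nat.choose_succ_succ (m + 1)] using ih 0
    | succ b =>
      simp only [Nat.choose_succ_succ' _ b, mul_add, sum_add_distrib, ih, Nat.choose_zero_succ,
        mul_zero, zero_add]
      rw [Nat.choose_succ_succ' (m + 1)]
      ring_nf

lemma Polynomial.coeff_sum_map_X_add_one_pow (A : Multiset ℕ) (k : ℕ) :
    ((A.map fun m => (X + 1 : ℤ[X]) ^ m).sum).coeff k = (A.map (·.choose k)).sum := by
  induction A using Multiset.induction_on with
  | empty => simp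
  | cons a A ih => simp [ih, coeff_X_add_one_pow]

lemma Polynomial.coeff_sum_map_X_pow (A : Multiset ℕ) (i : ℕ) :
    ((A.map fun m => (X : ℤ[X]) ^ m).sum).coeff i = A.count i := by
  induction A using Multiset.induction_on with
  | empty => simp
  | cons a A ih => simp [ih, coeff_X_pow, Multiset.count_cons, add_comm]

-- The moments are the coefficients of `∑ (X + 1) ^ m`; substituting `X - 1` for `X` turns it
-- into `∑ X ^ m`, whose coefficients are the multiplicities.
lemma Multiset.count_eq_of_sum_map_choose_eq {A B : Multiset ℕ}
    (h : ∀ k, 1 ≤ k → (A.map (·.choose k)).sum = (B.map (·.choose k)).sum) {i : ℕ}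
    (hi : 1 ≤ i) : A.count i = B.count i := by
  set P : Multiset ℕ → ℤ[X] := fun A => (A.map fun m => (X + 1) ^ m).sum
  obtain ⟨c, hc⟩ : ∃ c, P A - P B = C c := by
    refine ⟨(P A - P B).coeff 0, Polynomial.ext fun k => ?_⟩
    rcases k.eq_zero_or_pos with rfl | hk
    · simp
    · simp [P, hk.ne', coeff_sum_map_X_add_one_pow, h k hk]
  have hsub : ∀ A, aeval (X - 1 : ℤ[X]) (P A) = (A.map fun m => X ^ m).sum := fun A => by
    simp [P, map_multiset_sum, Multiset.map_map]
  have hcoeff := congrArg (fun p => (aeval (X - 1 : ℤ[X]) p).coeff i) hc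
  simp only [map_sub, hsub, coeff_sub, coeff_sum_map_X_pow, aeval_C, algebraMap_eq, coeff_C,
    if_neg (show i ≠ 0 by omega)] at hcoeff
  omega

namespace Clutter

variable {n : ℕ}

section Deletion

variable {D : Finset (Finset (Fin n))} {d : ℕ} {e : Finset (Fin n)}

lemma mem_del {F : Finset (Fin n)} : F ∈ del D e ↔ F ∈ D ∧ ¬ e ⊆ F :=
  mem_filter

lemma del_subset (D : Finset (Finset (Fin n))) (e : Finset (Fin n)) : del D e ⊆ D :=
  filter_subset _ _

lemma delList_cons (D : Finset (Finset (Fin n))) (e : Finset (Fin n))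
    (L : List (Finset (Fin n))) : delList D (e :: L) = delList (del D e) L :=
  rfl

lemma delList_append (D : Finset (Finset (Fin n))) (M L : List (Finset (Fin n))) :
    delList D (M ++ L) = delList (delList D M) L :=
  List.foldl_append

lemma mem_nbhd {c : Fin n} : c ∈ nbhd D e ↔ insert c e ∈ D := by
  simp [nbhd]

lemma isSimplicialSeq_cons {L : List (Finset (Fin n))} :
    IsSimplicialSeq D d (e :: L) ↔ IsSimplicial D d e ∧ IsSimplicialSeq (del D e) d L := by
  simp only [IsSimplicialSeq, List.length_cons, Nat.forall_lt_succ_left']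
  rfl

lemma IsSimplicialSeq.append {M L : List (Finset (Fin n))} (hM : IsSimplicialSeq D d M)
    (hL : IsSimplicialSeq (delList D M) d L) : IsSimplicialSeq D d (M ++ L) := by
  induction M generalizing D with
  | nil => exact hL
  | cons e M ih =>
    rw [isSimplicialSeq_cons] at hM
    exact isSimplicialSeq_cons.2 ⟨hM.1, ih hM.2 hL⟩

lemma IsSimplicialSeq.length_le_one {L : List (Finset (Fin n))} (hd : d ≤ 1)
    (hL : IsSimplicialSeq D d L) : L.length ≤ 1 := by
  rcases L with _ | ⟨e₀, _ | ⟨e₁, L⟩⟩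
  · simp
  · simp
  obtain ⟨⟨he₀, -⟩, ⟨-, ⟨F, hF, -⟩, -⟩, -⟩ := by
    simpa only [isSimplicialSeq_cons] using hL
  rw [card_eq_zero.1 (by omega : e₀.card = 0), mem_del] at hF
  exact absurd (empty_subset F) hF.2

end Deletion

def nbhdSizes : Finset (Finset (Fin n)) → List (Finset (Fin n)) → List ℕ
  | _, [] => []
  | D, e :: L => (nbhd D e).card :: nbhdSizes (del D e) L

lemma nbhdSizes_append (D : Finset (Finset (Fin n))) (M L : List (Finset (Fin n))) :
    nbhdSizes D (M ++ L) = nbhdSizes D M ++ nbhdSizes (delList D M) L := by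
  induction M generalizing D with
  | nil => rfl
  | cons e M ih => simp [nbhdSizes, ih, delList_cons]

lemma nbhdSizes_eq_ofFn (D : Finset (Finset (Fin n))) (L : List (Finset (Fin n))) :
    nbhdSizes D L =
      List.ofFn fun k : Fin L.length => (nbhd (delList D (L.take k)) (L.get k)).card := by
  induction L generalizing D with
  | nil => rfl
  | cons e L ih => simp only [nbhdSizes, ih, List.ofFn_succ]; rfl

lemma lamCount_eq_count (D : Finset (Finset (Fin n))) (L : List (Finset (Fin n))) (i : ℕ) :
    lamCount D L i = (nbhdSizes D L).count i := by
  rw [nbhdSizes_eq_ofFn, List.ofFn_eq_map, List.count, List.countP_map, lamCount,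
    List.countP_eq_length_filter]
  rfl

section Uniform

def IsUniform (D : Finset (Finset (Fin n))) (d : ℕ) : Prop :=
  ∀ F ∈ D, F.card = d

variable {D : Finset (Finset (Fin n))} {d : ℕ} {e : Finset (Fin n)}

lemma IsUniform.del (hU : IsUniform D d) (e : Finset (Fin n)) : IsUniform (del D e) d :=
  fun F hF => hU F (del_subset D e hF)

lemma isUniform_complete (n d : ℕ) : IsUniform (complete n d) d :=
  fun _ hF => (mem_filter.1 hF).2

lemma notMem_of_mem_nbhd {c : Fin n} (hU : IsUniform D d) (he : e.card = d - 1)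
    (hc : c ∈ nbhd D e) : c ∉ e := by
  intro hce
  have := hU _ (mem_nbhd.1 hc)
  rw [insert_eq_of_mem hce] at this
  rw [card_eq_zero.1 (by omega : e.card = 0)] at hce
  exact notMem_empty c hce

lemma IsSimplicial.nbhd_nonempty (hd : 1 ≤ d) (hU : IsUniform D d) (he : IsSimplicial D d e) :
    (nbhd D e).Nonempty := by
  obtain ⟨he, ⟨F, hF, heF⟩, -⟩ := he
  obtain ⟨c, hcF, hce⟩ := exists_of_ssubset (ssubset_of_subset_of_ne heF (by
    rintro rfl
    have := hU _ hF
    omega))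
  have hcF' : insert c e = F := eq_of_subset_of_card_le (insert_subset hcF heF) (by
    rw [card_insert_of_notMem hce, hU F hF]
    omega)
  exact ⟨c, mem_nbhd.2 (hcF' ▸ hF)⟩

lemma pos_of_mem_nbhdSizes {L : List (Finset (Fin n))} (hd : 1 ≤ d) (hU : IsUniform D d)
    (hL : IsSimplicialSeq D d L) : ∀ m ∈ nbhdSizes D L, 0 < m := by
  induction L generalizing D with
  | nil => simp [nbhdSizes]
  | cons e L ih =>
    rw [isSimplicialSeq_cons] at hL
    simp only [nbhdSizes, List.mem_cons, forall_eq_or_imp]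
    exact ⟨(hL.1.nbhd_nonempty hd hU).card_pos, ih (hU.del e) hL.2⟩

end Uniform

section Cliques

open Classical in
noncomputable def cliqueFinset (D : Finset (Finset (Fin n))) (d s : ℕ) :
    Finset (Finset (Fin n)) :=
  (powersetCard s univ).filter (IsClique D d)

variable {D : Finset (Finset (Fin n))} {d : ℕ} {e : Finset (Fin n)}

lemma mem_cliqueFinset {s : ℕ} {W : Finset (Fin n)} :
    W ∈ cliqueFinset D d s ↔ IsClique D d W ∧ W.card = s := by
  simp [cliqueFinset, and_comm]

lemma IsClique.subset {V W : Finset (Fin n)} (hV : IsClique D d V) (hWV : W ⊆ V) :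
    IsClique D d W :=
  fun F hF hc => hV F (hF.trans hWV) hc

-- A clique of size at least `d` containing `e` contains a circuit through `e`, so only the
-- cliques avoiding `e` survive the deletion.
lemma cliqueFinset_del {s : ℕ} (hd : 1 ≤ d) (he : e.card = d - 1) (hs : d ≤ s) :
    cliqueFinset (del D e) d s = (cliqueFinset D d s).filter (¬ e ⊆ ·) := by
  ext W
  simp only [mem_filter, mem_cliqueFinset]
  constructor
  · rintro ⟨hW, rfl⟩
    refine ⟨⟨fun F hFW hF => del_subset D e (hW F hFW hF), rfl⟩, fun heW => ?_⟩
    obtain ⟨c, hcW, hce⟩ := exists_of_ssubset (ssubset_of_subset_of_ne heW (by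
      rintro rfl
      omega))
    have hcard : (insert c e).card = d := by
      rw [card_insert_of_notMem hce]
      omega
    exact (mem_del.1 (hW _ (insert_subset hcW heW) hcard)).2 (subset_insert c e)
  · rintro ⟨⟨hW, rfl⟩, heW⟩
    exact ⟨fun F hFW hF => mem_del.2 ⟨hW F hFW hF, fun heF => heW (heF.trans hFW)⟩, rfl⟩

-- The cliques through a simplicial `e` are exactly the sets `e ∪ S` with `S ⊆ N(e)`.
lemma card_cliqueFinset_filter_subset {k : ℕ} (hd : 1 ≤ d) (hU : IsUniform D d)
    (he : IsSimplicial D d e) :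
    ((cliqueFinset D d (d - 1 + k)).filter (e ⊆ ·)).card = (nbhd D e).card.choose k := by
  obtain ⟨hecard, -, hclique⟩ := he
  have hdisj : ∀ S ⊆ nbhd D e, Disjoint e S := fun S hS =>
    disjoint_right.2 fun c hc => notMem_of_mem_nbhd hU hecard (hS hc)
  rw [← card_powersetCard]
  refine card_nbij' (· \ e) (e ∪ ·) ?_ ?_ ?_ ?_
  · intro W hW
    rw [mem_coe, mem_filter, mem_cliqueFinset] at hW
    obtain ⟨⟨hW, hWcard⟩, heW⟩ := hW
    refine mem_powersetCard.2 ⟨fun c hc => mem_nbhd.2 ?_, ?_⟩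
    · rw [mem_sdiff] at hc
      exact hW _ (insert_subset hc.1 heW) (by rw [card_insert_of_notMem hc.2]; omega)
    · rw [card_sdiff_of_subset heW]
      omega
  · intro S hS
    rw [mem_coe, mem_powersetCard] at hS
    rw [mem_coe, mem_filter, mem_cliqueFinset]
    refine ⟨⟨hclique.subset (union_subset_union subset_rfl hS.1), ?_⟩, subset_union_left⟩
    rw [card_union_of_disjoint (hdisj S hS.1), hecard, hS.2]
  · intro W hW
    exact union_sdiff_of_subset (mem_filter.1 hW).2
  · intro S hS
    rw [mem_coe, mem_powersetCard] at hS
    exact union_sdiff_cancel_left (hdisj S hS.1)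

lemma card_cliqueFinset_del {k : ℕ} (hd : 1 ≤ d) (hU : IsUniform D d) (he : IsSimplicial D d e)
    (hk : 1 ≤ k) :
    (cliqueFinset D d (d - 1 + k)).card =
      (cliqueFinset (del D e) d (d - 1 + k)).card + (nbhd D e).card.choose k := by
  rw [cliqueFinset_del hd he.1 (by omega), ← card_cliqueFinset_filter_subset hd hU he]
  exact (card_filter_add_card_filter_not _).symm.trans (add_comm _ _)

lemma cliqueFinset_empty {s : ℕ} (hds : d ≤ s) :
    cliqueFinset (∅ : Finset (Finset (Fin n))) d s = ∅ := by
  refine eq_empty_of_forall_notMem fun W hW => ?_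
  obtain ⟨hcl, rfl⟩ := mem_cliqueFinset.1 hW
  obtain ⟨F, hFW, hF⟩ := exists_subset_card_eq hds
  exact notMem_empty F (hcl F hFW hF)

lemma card_cliqueFinset_eq_sum_choose {k : ℕ} {L : List (Finset (Fin n))} (hd : 1 ≤ d)
    (hU : IsUniform D d) (hL : IsSimplicialSeq D d L) (hL' : delList D L = ∅) (hk : 1 ≤ k) :
    (cliqueFinset D d (d - 1 + k)).card = ((nbhdSizes D L).map (·.choose k)).sum := by
  induction L generalizing D with
  | nil =>
    subst hL'
    simp [cliqueFinset_empty (by omega : d ≤ d - 1 + k), nbhdSizes]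
  | cons e L ih =>
    rw [isSimplicialSeq_cons] at hL
    rw [card_cliqueFinset_del hd hU hL.1 hk, ih (hU.del e) hL.2 hL', nbhdSizes, List.map_cons,
      List.sum_cons, add_comm]

lemma isClique_complete (d : ℕ) (W : Finset (Fin n)) : IsClique (complete n d) d W :=
  fun F _ hF => mem_filter.2 ⟨mem_univ F, hF⟩

lemma card_cliqueFinset_complete (d s : ℕ) :
    (cliqueFinset (complete n d) d s).card = n.choose s := by
  have : cliqueFinset (complete n d) d s = powersetCard s univ := by
    ext W
    rw [mem_cliqueFinset, mem_powersetCard, and_iff_right (subset_univ W),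
      and_iff_right (isClique_complete d W)]
  rw [this, card_powersetCard, card_univ, Fintype.card_fin]

end Cliques

def completeLambda (n d : ℕ) : Multiset ℕ :=
  (Multiset.range n).bind fun j => Multiset.replicate ((n - 1 - j).choose (d - 2)) j

lemma sum_map_choose_completeLambda {d k : ℕ} (hd : 2 ≤ d) (hk : 1 ≤ k) :
    ((completeLambda n d).map (·.choose k)).sum = n.choose (d - 1 + k) := by
  rcases n with _ | m
  · simp [completeLambda, Nat.choose_eq_zero_of_lt, (by omega : 0 < d - 1 + k)]
  · simp only [completeLambda, Multiset.map_bind, Multiset.sum_bind, Multiset.map_replicate,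
      Multiset.sum_replicate, smul_eq_mul, ← range_val, ← sum_eq_multiset_sum, Nat.add_sub_cancel]
    rw [← Nat.sum_antidiagonal_eq_sum_range_succ (fun i j => j.choose (d - 2) * i.choose k)]
    simp_rw [mul_comm (Nat.choose _ (d - 2))]
    rw [Nat.sum_antidiagonal_choose_mul_choose]
    congr 1
    omega

lemma count_completeLambda_le (n d i : ℕ) :
    (completeLambda n d).count i ≤ (n - 1 - i).choose (d - 2) := by
  simp only [completeLambda, Multiset.count_bind, Multiset.count_replicate, ← range_val,
    ← sum_eq_multiset_sum]
  rw [sum_ite_eq']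
  split_ifs <;> simp

lemma sum_map_choose_nbhdSizes_complete {d k : ℕ} {L : List (Finset (Fin n))} (hd : 1 ≤ d)
    (hL : IsSimplicialSeq (complete n d) d L) (hL' : delList (complete n d) L = ∅) (hk : 1 ≤ k) :
    ((nbhdSizes (complete n d) L).map (·.choose k)).sum = n.choose (d - 1 + k) := by
  rw [← card_cliqueFinset_eq_sum_choose hd (isUniform_complete n d) hL hL' hk,
    card_cliqueFinset_complete]

lemma count_nbhdSizes_complete_le {d : ℕ} {L : List (Finset (Fin n))} (hd : 2 ≤ d)
    (hL : IsSimplicialSeq (complete n d) d L) (hL' : delList (complete n d) L = ∅) (i : ℕ) :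
    (nbhdSizes (complete n d) L).count i ≤ (n - 1 - i).choose (d - 2) := by
  rcases Nat.eq_zero_or_pos i with rfl | hi
  · have h0 : 0 ∉ nbhdSizes (complete n d) L := fun h =>
      (pos_of_mem_nbhdSizes (by omega) (isUniform_complete n d) hL 0 h).false
    simp [List.count_eq_zero.2 h0]
  have hmoments : ∀ k, 1 ≤ k → ((nbhdSizes (complete n d) L : Multiset ℕ).map (·.choose k)).sum =
      ((completeLambda n d).map (·.choose k)).sum := fun k hk => by
    rw [Multiset.map_coe, Multiset.sum_coe, sum_map_choose_nbhdSizes_complete (by omega) hL hL' hk,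
      sum_map_choose_completeLambda hd hk]
  rw [← Multiset.coe_count, Multiset.count_eq_of_sum_map_choose_eq hmoments hi]
  exact count_completeLambda_le n d i

theorem stmt19_general (n d : ℕ) (C : Finset (Finset (Fin n)))
    (hco : IsCoChordal d C)
    (L : List (Finset (Fin n))) (hL : IsSimplicialSeq C d L) (hL' : delList C L = ∅)
    (i : ℕ) :
    lamCount C L i ≤ (n - 1 - i).choose (d - 2) := by
  rcases le_or_gt d 1 with hd | hd
  · -- Here `d - 2 = 0`, so the bound is `1`.
    calc lamCount C L i ≤ L.length := (List.length_filter_le _ _).trans_eq List.length_finRange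
      _ ≤ 1 := hL.length_le_one hd
      _ = _ := by rw [Nat.sub_eq_zero_of_le (by omega : d ≤ 2), Nat.choose_zero_right]
  obtain ⟨M, hM, rfl⟩ := hco
  calc lamCount (delList (complete n d) M) L i
      ≤ (nbhdSizes (complete n d) (M ++ L)).count i := by
        rw [lamCount_eq_count, nbhdSizes_append, List.count_append]
        omega
    _ ≤ _ := count_nbhdSizes_complete_le hd (hM.append hL) (by rw [delList_append, hL']) i

/-- If a `d`-uniform clutter `C` on `[n]` is both chordal (witnessed by the simplicial
order `L`) and co-chordal, then `λ_i(C) ≤ C(n-1-i, d-2)` for all `i`. -/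
theorem stmt19 (n d : ℕ) (hd : 1 ≤ d) (C : Finset (Finset (Fin n)))
    (hunif : ∀ F ∈ C, F.card = d)
    (hco : IsCoChordal d C)
    (L : List (Finset (Fin n))) (hL : IsSimplicialSeq C d L) (hL' : delList C L = ∅)
    (i : ℕ) :
    lamCount C L i ≤ (n - 1 - i).choose (d - 2) :=
  stmt19_general n d C hco L hL hL' i

end Clutter
end
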